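/- arXiv:1812.03838 — 2 statements merged into one kernel-verified Lean document; each statement's English description precedes it below -/
import Mathlib

section
/- Let X, Y be independent random variables on finite spaces, and let U_1, ..., U_r be random variables such that for each odd i, the Markov chain U_i - (U_1,...,U_{i-1}, X) - Y holds, and for each even i, the Markov chain U_i - (U_1,...,U_{i-1}, Y) - X holds. Then I(X; Y | U_1, ..., U_r) = 0, i.e., X and Y are conditionally independent given (U_1, ..., U_r). -/
open Finset

open Classical in
noncomputable def prob {Ω α : Type*} [Fintype Ω] (p : Ω → ℝ) (X : Ω → α) (x : α) : ℝ :=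
  ∑ ω, if X ω = x then p ω else 0

noncomputable def H2 {Ω α : Type*} [Fintype Ω] [Fintype α] (p : Ω → ℝ) (X : Ω → α) : ℝ :=
  -∑ x, prob p X x * Real.logb 2 (prob p X x)

noncomputable def condH {Ω α β : Type*} [Fintype Ω] [Fintype α] [Fintype β]
    (p : Ω → ℝ) (X : Ω → α) (Y : Ω → β) : ℝ :=
  -∑ x, ∑ y, prob p (fun ω => (X ω, Y ω)) (x, y) *
      Real.logb 2 (prob p (fun ω => (X ω, Y ω)) (x, y) / prob p Y y)

noncomputable def MI {Ω α β : Type*} [Fintype Ω] [Fintype α] [Fintype β]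
    (p : Ω → ℝ) (X : Ω → α) (Y : Ω → β) : ℝ :=
  ∑ x, ∑ y, prob p (fun ω => (X ω, Y ω)) (x, y) *
      Real.logb 2 (prob p (fun ω => (X ω, Y ω)) (x, y) / (prob p X x * prob p Y y))

noncomputable def condMI {Ω α β γ : Type*} [Fintype Ω] [Fintype α] [Fintype β] [Fintype γ]
    (p : Ω → ℝ) (X : Ω → α) (Y : Ω → β) (Z : Ω → γ) : ℝ :=
  ∑ x, ∑ y, ∑ z, prob p (fun ω => (X ω, Y ω, Z ω)) (x, y, z) *
      Real.logb 2 (prob p (fun ω => (X ω, Y ω, Z ω)) (x, y, z) * prob p Z z /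
        (prob p (fun ω => (X ω, Z ω)) (x, z) * prob p (fun ω => (Y ω, Z ω)) (y, z)))

def IsPMF {Ω : Type*} [Fintype Ω] (p : Ω → ℝ) : Prop :=
  (∀ ω, 0 ≤ p ω) ∧ ∑ ω, p ω = 1

def MarkovChain {Ω α β γ : Type*} [Fintype Ω] (p : Ω → ℝ)
    (A : Ω → α) (B : Ω → β) (C : Ω → γ) : Prop :=
  ∀ a b c, prob p (fun ω => (A ω, B ω, C ω)) (a, b, c) * prob p B b =
    prob p (fun ω => (A ω, B ω)) (a, b) * prob p (fun ω => (C ω, B ω)) (c, b)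

section tools
variable {Ω α β γ : Type*} [Fintype Ω]

open Classical in
lemma prob_nonneg {p : Ω → ℝ} (hp : ∀ ω, 0 ≤ p ω) (f : Ω → α) (a : α) :
    0 ≤ prob p f a := by
  unfold prob
  exact Finset.sum_nonneg fun ω _ => by split <;> simp [hp ω]

open Classical in
lemma prob_eq_prob (p : Ω → ℝ) (f : Ω → α) (g : Ω → β) (a : α) (b : β)
    (h : ∀ ω, f ω = a ↔ g ω = b) :
    prob p f a = prob p g b := by
  unfold prob
  refine Finset.sum_congr rfl fun ω _ => ?_
  by_cases h' : f ω = a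
  · rw [if_pos h', if_pos ((h ω).1 h')]
  · rw [if_neg h', if_neg (fun hg => h' ((h ω).2 hg))]

open Classical in
lemma prob_le_prob {p : Ω → ℝ} (hp : ∀ ω, 0 ≤ p ω) (f : Ω → α) (g : Ω → β) (a : α) (b : β)
    (h : ∀ ω, f ω = a → g ω = b) :
    prob p f a ≤ prob p g b := by
  unfold prob
  refine Finset.sum_le_sum fun ω _ => ?_
  by_cases h' : f ω = a
  · rw [if_pos h', if_pos (h ω h')]
  · rw [if_neg h']; split <;> simp [hp ω]

open Classical in
lemma prob_marg [Fintype β] (p : Ω → ℝ) (f : Ω → α) (g : Ω → β) (a : α) :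
    prob p f a = ∑ b, prob p (fun ω => (f ω, g ω)) (a, b) := by
  unfold prob
  rw [Finset.sum_comm]
  refine Finset.sum_congr rfl fun ω _ => ?_
  by_cases h : f ω = a
  · simp [h, Prod.ext_iff]
  · simp [h, Prod.ext_iff]

lemma gibbs {ι : Type*} (s : Finset ι) (f g : ι → ℝ)
    (hf : ∀ i ∈ s, 0 ≤ f i) (hg : ∀ i ∈ s, 0 ≤ g i)
    (hac : ∀ i ∈ s, g i = 0 → f i = 0)
    (hsum : ∑ i ∈ s, f i = ∑ i ∈ s, g i)
    (hzero : ∑ i ∈ s, f i * Real.logb 2 (f i / g i) = 0) :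
    ∀ i ∈ s, f i = g i := by
  by_contra hcon
  push_neg at hcon
  obtain ⟨i0, hi0, hne⟩ := hcon
  have point : ∀ i ∈ s, f i - g i ≤ f i * Real.log (f i / g i) ∧
      (f i ≠ g i → f i - g i < f i * Real.log (f i / g i)) := by
    intro i hi
    rcases eq_or_lt_of_le (hf i hi) with h0 | h0
    · constructor
      · simp [← h0]; linarith [hg i hi]
      · intro hne'
        have hgpos : 0 < g i := lt_of_le_of_ne (hg i hi) (fun h => hne' (by rw [← h0, ← h]))
        simp [← h0]; linarith
    · have hgpos : 0 < g i :=
        lt_of_le_of_ne (hg i hi) (fun h => by have := hac i hi h.symm; linarith)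
      have hq : 0 < g i / f i := div_pos hgpos h0
      have hfg : f i * (g i / f i) = g i := by field_simp
      have hinv : Real.log (f i / g i) = - Real.log (g i / f i) := by
        rw [← Real.log_inv]; congr 1; rw [inv_div]
      constructor
      · have hlog : Real.log (g i / f i) ≤ g i / f i - 1 := Real.log_le_sub_one_of_pos hq
        have := mul_le_mul_of_nonneg_left hlog (le_of_lt h0)
        rw [hinv, mul_neg]; nlinarith
      · intro hne'
        have hq1 : g i / f i ≠ 1 := by
          intro h1
          apply hne'
          field_simp at h1
          exact h1.symm
        have hlog : Real.log (g i / f i) < g i / f i - 1 := Real.log_lt_sub_one_of_pos hq hq1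
        have := (mul_lt_mul_iff_right₀ h0).2 hlog
        rw [hinv, mul_neg]; nlinarith
  have hL : 0 < ∑ i ∈ s, f i * Real.log (f i / g i) := by
    calc 0 = ∑ i ∈ s, (f i - g i) := by rw [Finset.sum_sub_distrib, hsum]; ring
    _ < ∑ i ∈ s, f i * Real.log (f i / g i) :=
      Finset.sum_lt_sum (fun i hi => (point i hi).1) ⟨i0, hi0, (point i0 hi0).2 hne⟩
  have hrw : ∑ i ∈ s, f i * Real.logb 2 (f i / g i)
      = (∑ i ∈ s, f i * Real.log (f i / g i)) / Real.log 2 := by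
    rw [Finset.sum_div]
    exact Finset.sum_congr rfl fun i _ => by rw [Real.logb, mul_div_assoc]
  rw [hrw] at hzero
  have h2 : 0 < Real.log 2 := Real.log_pos (by norm_num)
  rw [div_eq_zero_iff] at hzero
  rcases hzero with h | h
  · linarith
  · linarith

end tools

section core
variable {α β γ : Type*} [Fintype α] [Fintype β] [Fintype γ]

lemma kl_core (J : α → β → γ → ℝ) (Pa : α → γ → ℝ) (Pb : β → γ → ℝ) (Pz : γ → ℝ)
    (hJnn : ∀ a b z, 0 ≤ J a b z) (hPann : ∀ a z, 0 ≤ Pa a z)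
    (hPbnn : ∀ b z, 0 ≤ Pb b z) (hPznn : ∀ z, 0 ≤ Pz z)
    (hJa : ∀ a b z, J a b z ≤ Pa a z) (hJb : ∀ a b z, J a b z ≤ Pb b z)
    (hJz : ∀ a b z, J a b z ≤ Pz z) (haz : ∀ a z, Pa a z ≤ Pz z)
    (hsumA : ∀ z, ∑ a, Pa a z = Pz z) (hsumB : ∀ z, ∑ b, Pb b z = Pz z)
    (hsumJ : ∀ z, ∑ a, ∑ b, J a b z = Pz z)
    (hzero : ∑ a, ∑ b, ∑ z, J a b z *
      Real.logb 2 (J a b z * Pz z / (Pa a z * Pb b z)) = 0) :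
    ∀ a b z, J a b z * Pz z = Pa a z * Pb b z := by
  have key := gibbs (Finset.univ : Finset (α × β × γ))
    (fun i => J i.1 i.2.1 i.2.2) (fun i => Pa i.1 i.2.2 * Pb i.2.1 i.2.2 / Pz i.2.2)
    (fun i _ => hJnn _ _ _)
    (fun i _ => div_nonneg (mul_nonneg (hPann _ _) (hPbnn _ _)) (hPznn _))
    (fun i _ hg0 => by
      rcases eq_or_lt_of_le (hPznn i.2.2) with hz | hz
      · exact le_antisymm (le_trans (hJz _ _ _) hz.symm.le) (hJnn _ _ _)
      · rw [div_eq_zero_iff] at hg0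
        rcases hg0 with hg0 | hg0
        · rcases mul_eq_zero.1 hg0 with h0 | h0
          · exact le_antisymm (h0 ▸ hJa _ _ _) (hJnn _ _ _)
          · exact le_antisymm (h0 ▸ hJb _ _ _) (hJnn _ _ _)
        · linarith)
    (by
      rw [Fintype.sum_prod_type, Fintype.sum_prod_type]
      simp only [Fintype.sum_prod_type]
      have e1 : ∑ a, ∑ b, ∑ z, J a b z = ∑ z, Pz z := by
        calc ∑ a, ∑ b, ∑ z, J a b z = ∑ a, ∑ z, ∑ b, J a b z :=
              Finset.sum_congr rfl fun a _ => Finset.sum_comm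
          _ = ∑ z, ∑ a, ∑ b, J a b z := Finset.sum_comm
          _ = ∑ z, Pz z := Finset.sum_congr rfl fun z _ => hsumJ z
      have e2 : ∑ a, ∑ b, ∑ z, Pa a z * Pb b z / Pz z = ∑ z, Pz z := by
        calc ∑ a, ∑ b, ∑ z, Pa a z * Pb b z / Pz z
            = ∑ a, ∑ z, ∑ b, Pa a z * Pb b z / Pz z :=
              Finset.sum_congr rfl fun a _ => Finset.sum_comm
          _ = ∑ z, ∑ a, ∑ b, Pa a z * Pb b z / Pz z := Finset.sum_comm
          _ = ∑ z, Pz z := by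
              refine Finset.sum_congr rfl fun z _ => ?_
              rcases eq_or_lt_of_le (hPznn z) with hz | hz
              · have h2 : ∀ a, Pa a z = 0 := fun a =>
                  le_antisymm (le_trans (haz a z) hz.symm.le) (hPann a z)
                simp [h2, ← hz]
              · have : ∑ a, ∑ b, Pa a z * Pb b z / Pz z
                    = (∑ a, Pa a z) * (∑ b, Pb b z) / Pz z := by
                  rw [Finset.sum_mul, Finset.sum_div]
                  refine Finset.sum_congr rfl fun a _ => ?_
                  rw [← Finset.sum_div, ← Finset.mul_sum]
                rw [this, hsumA, hsumB]
                field_simp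
      rw [e1, e2])
    (by
      rw [← hzero]
      rw [Fintype.sum_prod_type]
      simp only [Fintype.sum_prod_type]
      refine Finset.sum_congr rfl fun a _ => Finset.sum_congr rfl fun b _ =>
        Finset.sum_congr rfl fun z _ => ?_
      exact congrArg (fun t => J a b z * Real.logb 2 t)
        (div_div_eq_mul_div (J a b z) (Pa a z * Pb b z) (Pz z)))
  intro a b z
  have hkey := key (a, b, z) (Finset.mem_univ _)
  simp only at hkey
  rcases eq_or_lt_of_le (hPznn z) with hz | hz
  · have h1 : J a b z = 0 := le_antisymm (le_trans (hJz a b z) hz.symm.le) (hJnn a b z)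
    have h2 : Pa a z = 0 := le_antisymm (le_trans (haz a z) hz.symm.le) (hPann a z)
    rw [h1, h2, zero_mul, zero_mul]
  · rw [hkey]
    field_simp

end core

section cmi
variable {Ω α β γ : Type*} [Fintype Ω] [Fintype α] [Fintype β] [Fintype γ]

lemma condMI_eq_zero_imp (p : Ω → ℝ) (hp : IsPMF p) (A : Ω → α) (B : Ω → β) (Z : Ω → γ)
    (h : condMI p A B Z = 0) :
    ∀ a b z, prob p (fun ω => (A ω, B ω, Z ω)) (a, b, z) * prob p Z z =
      prob p (fun ω => (A ω, Z ω)) (a, z) * prob p (fun ω => (B ω, Z ω)) (b, z) := by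
  have hp0 := hp.1
  have hsumA : ∀ z, ∑ a, prob p (fun ω => (A ω, Z ω)) (a, z) = prob p Z z := by
    intro z
    rw [prob_marg p Z A z]
    exact Finset.sum_congr rfl fun a _ => prob_eq_prob p _ _ _ _ (fun ω => by
      simp only [Prod.mk.injEq]; tauto)
  have hsumB : ∀ z, ∑ b, prob p (fun ω => (B ω, Z ω)) (b, z) = prob p Z z := by
    intro z
    rw [prob_marg p Z B z]
    exact Finset.sum_congr rfl fun b _ => prob_eq_prob p _ _ _ _ (fun ω => by
      simp only [Prod.mk.injEq]; tauto)
  have hsumJ : ∀ z, ∑ a, ∑ b, prob p (fun ω => (A ω, B ω, Z ω)) (a, b, z) = prob p Z z := by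
    intro z
    rw [← hsumA z]
    refine Finset.sum_congr rfl fun a _ => ?_
    rw [prob_marg p (fun ω => (A ω, Z ω)) B (a, z)]
    exact Finset.sum_congr rfl fun b _ => prob_eq_prob p _ _ _ _ (fun ω => by
      simp only [Prod.mk.injEq]; tauto)
  exact kl_core _ _ _ _
    (fun a b z => prob_nonneg hp0 _ _) (fun a z => prob_nonneg hp0 _ _)
    (fun b z => prob_nonneg hp0 _ _) (fun z => prob_nonneg hp0 _ _)
    (fun a b z => prob_le_prob hp0 _ _ _ _ (fun ω h' => by
      simp only [Prod.mk.injEq] at h' ⊢; exact ⟨h'.1, h'.2.2⟩))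
    (fun a b z => prob_le_prob hp0 _ _ _ _ (fun ω h' => by
      simp only [Prod.mk.injEq] at h' ⊢; exact ⟨h'.2.1, h'.2.2⟩))
    (fun a b z => prob_le_prob hp0 _ _ _ _ (fun ω h' => by
      simp only [Prod.mk.injEq] at h'; exact h'.2.2))
    (fun a z => prob_le_prob hp0 _ _ _ _ (fun ω h' => by
      simp only [Prod.mk.injEq] at h'; exact h'.2))
    hsumA hsumB hsumJ h

lemma condMI_eq_zero_of_factor (p : Ω → ℝ) (hp : ∀ ω, 0 ≤ p ω)
    (A : Ω → α) (B : Ω → β) (Z : Ω → γ)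
    (h : ∀ a b z, prob p (fun ω => (A ω, B ω, Z ω)) (a, b, z) * prob p Z z =
      prob p (fun ω => (A ω, Z ω)) (a, z) * prob p (fun ω => (B ω, Z ω)) (b, z)) :
    condMI p A B Z = 0 := by
  unfold condMI
  refine Finset.sum_eq_zero fun a _ => Finset.sum_eq_zero fun b _ =>
    Finset.sum_eq_zero fun z _ => ?_
  rcases eq_or_lt_of_le (prob_nonneg hp (fun ω => (A ω, B ω, Z ω)) (a, b, z)) with h0 | h0
  · rw [← h0, zero_mul]
  · have hJa : prob p (fun ω => (A ω, B ω, Z ω)) (a, b, z) ≤ prob p (fun ω => (A ω, Z ω)) (a, z) :=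
      prob_le_prob hp _ _ _ _ (fun ω h' => by
        simp only [Prod.mk.injEq] at h' ⊢; exact ⟨h'.1, h'.2.2⟩)
    have hJb : prob p (fun ω => (A ω, B ω, Z ω)) (a, b, z) ≤ prob p (fun ω => (B ω, Z ω)) (b, z) :=
      prob_le_prob hp _ _ _ _ (fun ω h' => by
        simp only [Prod.mk.injEq] at h' ⊢; exact ⟨h'.2.1, h'.2.2⟩)
    have hratio : prob p (fun ω => (A ω, B ω, Z ω)) (a, b, z) * prob p Z z /
        (prob p (fun ω => (A ω, Z ω)) (a, z) * prob p (fun ω => (B ω, Z ω)) (b, z)) = 1 := by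
      rw [h]
      exact div_self (ne_of_gt (mul_pos (lt_of_lt_of_le h0 hJa) (lt_of_lt_of_le h0 hJb)))
    rw [hratio, Real.logb_one, mul_zero]

end cmi

section step
variable {Ω 𝒳 𝒴 τ υ : Type*} [Fintype Ω] [Fintype 𝒳] [Fintype 𝒴] [Fintype τ] [Fintype υ]

/-- One round of communication preserves conditional independence. -/
lemma step_lemma (p : Ω → ℝ) (hp : ∀ ω, 0 ≤ p ω)
    (X : Ω → 𝒳) (Y : Ω → 𝒴) (V : Ω → τ) (W : Ω → υ)
    (ih : ∀ x y u, prob p (fun ω => (X ω, Y ω, V ω)) (x, y, u) * prob p V u =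
      prob p (fun ω => (X ω, V ω)) (x, u) * prob p (fun ω => (Y ω, V ω)) (y, u))
    (mc : ∀ v y u x,
      prob p (fun ω => (W ω, Y ω, (V ω, X ω))) (v, y, (u, x)) *
        prob p (fun ω => (V ω, X ω)) (u, x) =
      prob p (fun ω => (W ω, (V ω, X ω))) (v, (u, x)) *
        prob p (fun ω => (Y ω, (V ω, X ω))) (y, (u, x))) :
    ∀ x y u v,
      prob p (fun ω => (X ω, Y ω, (V ω, W ω))) (x, y, (u, v)) *
        prob p (fun ω => (V ω, W ω)) (u, v) =
      prob p (fun ω => (X ω, (V ω, W ω))) (x, (u, v)) *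
        prob p (fun ω => (Y ω, (V ω, W ω))) (y, (u, v)) := by
  -- abbreviations as plain statements about prob; we use raw terms throughout
  -- rewritten Markov chain: M4 * A2 = A * M3
  have mc' : ∀ x y u v,
      prob p (fun ω => (X ω, Y ω, (V ω, W ω))) (x, y, (u, v)) *
        prob p (fun ω => (X ω, V ω)) (x, u) =
      prob p (fun ω => (X ω, (V ω, W ω))) (x, (u, v)) *
        prob p (fun ω => (X ω, Y ω, V ω)) (x, y, u) := by
    intro x y u v
    have h1 : prob p (fun ω => (W ω, Y ω, (V ω, X ω))) (v, y, (u, x)) =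
        prob p (fun ω => (X ω, Y ω, (V ω, W ω))) (x, y, (u, v)) :=
      prob_eq_prob p _ _ _ _ (fun ω => by simp only [Prod.mk.injEq]; tauto)
    have h2 : prob p (fun ω => (V ω, X ω)) (u, x) =
        prob p (fun ω => (X ω, V ω)) (x, u) :=
      prob_eq_prob p _ _ _ _ (fun ω => by simp only [Prod.mk.injEq]; tauto)
    have h3 : prob p (fun ω => (W ω, (V ω, X ω))) (v, (u, x)) =
        prob p (fun ω => (X ω, (V ω, W ω))) (x, (u, v)) :=
      prob_eq_prob p _ _ _ _ (fun ω => by simp only [Prod.mk.injEq]; tauto)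
    have h4 : prob p (fun ω => (Y ω, (V ω, X ω))) (y, (u, x)) =
        prob p (fun ω => (X ω, Y ω, V ω)) (x, y, u) :=
      prob_eq_prob p _ _ _ _ (fun ω => by simp only [Prod.mk.injEq]; tauto)
    rw [← h1, ← h2, ← h3, ← h4]
    exact mc v y u x
  -- marginal bounds
  have hA2C1 : ∀ x u, prob p (fun ω => (X ω, V ω)) (x, u) ≤ prob p V u := fun x u =>
    prob_le_prob hp _ _ _ _ (fun ω h' => by
      simp only [Prod.mk.injEq] at h'; exact h'.2)
  have hM4A2 : ∀ x y u v,
      prob p (fun ω => (X ω, Y ω, (V ω, W ω))) (x, y, (u, v)) ≤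
        prob p (fun ω => (X ω, V ω)) (x, u) := fun x y u v =>
    prob_le_prob hp _ _ _ _ (fun ω h' => by
      simp only [Prod.mk.injEq] at h' ⊢; exact ⟨h'.1, h'.2.2.1⟩)
  have hAA2 : ∀ x u v,
      prob p (fun ω => (X ω, (V ω, W ω))) (x, (u, v)) ≤
        prob p (fun ω => (X ω, V ω)) (x, u) := fun x u v =>
    prob_le_prob hp _ _ _ _ (fun ω h' => by
      simp only [Prod.mk.injEq] at h' ⊢; exact ⟨h'.1, h'.2.1⟩)
  -- claim1 : M4 x y u v * C1 u = A x u v * B2 y u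
  have claim1 : ∀ x y u v,
      prob p (fun ω => (X ω, Y ω, (V ω, W ω))) (x, y, (u, v)) * prob p V u =
      prob p (fun ω => (X ω, (V ω, W ω))) (x, (u, v)) *
        prob p (fun ω => (Y ω, V ω)) (y, u) := by
    intro x y u v
    rcases eq_or_lt_of_le (prob_nonneg hp (fun ω => (X ω, V ω)) (x, u)) with h0 | h0
    · have e1 : prob p (fun ω => (X ω, Y ω, (V ω, W ω))) (x, y, (u, v)) = 0 :=
        le_antisymm (le_trans (hM4A2 x y u v) h0.symm.le) (prob_nonneg hp _ _)
      have e2 : prob p (fun ω => (X ω, (V ω, W ω))) (x, (u, v)) = 0 :=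
        le_antisymm (le_trans (hAA2 x u v) h0.symm.le) (prob_nonneg hp _ _)
      rw [e1, e2, zero_mul, zero_mul]
    · have h5 := mc' x y u v
      have h6 := ih x y u
      -- M4 * A2 * C1 = A * (M3 * C1) = A * (A2 * B2)
      have h7 : prob p (fun ω => (X ω, Y ω, (V ω, W ω))) (x, y, (u, v)) * prob p V u *
          prob p (fun ω => (X ω, V ω)) (x, u) =
          prob p (fun ω => (X ω, (V ω, W ω))) (x, (u, v)) *
            prob p (fun ω => (Y ω, V ω)) (y, u) *
          prob p (fun ω => (X ω, V ω)) (x, u) := by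
        calc prob p (fun ω => (X ω, Y ω, (V ω, W ω))) (x, y, (u, v)) * prob p V u *
            prob p (fun ω => (X ω, V ω)) (x, u)
            = prob p (fun ω => (X ω, Y ω, (V ω, W ω))) (x, y, (u, v)) *
              prob p (fun ω => (X ω, V ω)) (x, u) * prob p V u := by ring
          _ = prob p (fun ω => (X ω, (V ω, W ω))) (x, (u, v)) *
              (prob p (fun ω => (X ω, Y ω, V ω)) (x, y, u) * prob p V u) := by
              rw [h5]; ring
          _ = prob p (fun ω => (X ω, (V ω, W ω))) (x, (u, v)) *
              (prob p (fun ω => (X ω, V ω)) (x, u) * prob p (fun ω => (Y ω, V ω)) (y, u)) := by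
              rw [h6]
          _ = prob p (fun ω => (X ω, (V ω, W ω))) (x, (u, v)) *
              prob p (fun ω => (Y ω, V ω)) (y, u) *
              prob p (fun ω => (X ω, V ω)) (x, u) := by ring
      exact mul_right_cancel₀ (ne_of_gt h0) h7
  -- claim2 : B y u v * C1 u = C u v * B2 y u
  have hBsum : ∀ y u v, prob p (fun ω => (Y ω, (V ω, W ω))) (y, (u, v)) =
      ∑ x, prob p (fun ω => (X ω, Y ω, (V ω, W ω))) (x, y, (u, v)) := by
    intro y u v
    rw [prob_marg p (fun ω => (Y ω, (V ω, W ω))) X (y, (u, v))]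
    exact Finset.sum_congr rfl fun x _ => prob_eq_prob p _ _ _ _ (fun ω => by
      simp only [Prod.mk.injEq]; tauto)
  have hCsum : ∀ u v, prob p (fun ω => (V ω, W ω)) (u, v) =
      ∑ x, prob p (fun ω => (X ω, (V ω, W ω))) (x, (u, v)) := by
    intro u v
    rw [prob_marg p (fun ω => (V ω, W ω)) X (u, v)]
    exact Finset.sum_congr rfl fun x _ => prob_eq_prob p _ _ _ _ (fun ω => by
      simp only [Prod.mk.injEq]; tauto)
  have claim2 : ∀ y u v,
      prob p (fun ω => (Y ω, (V ω, W ω))) (y, (u, v)) * prob p V u =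
      prob p (fun ω => (V ω, W ω)) (u, v) * prob p (fun ω => (Y ω, V ω)) (y, u) := by
    intro y u v
    rw [hBsum, hCsum, Finset.sum_mul, Finset.sum_mul]
    exact Finset.sum_congr rfl fun x _ => claim1 x y u v
  -- conclusion
  intro x y u v
  rcases eq_or_lt_of_le (prob_nonneg hp V u) with h0 | h0
  · have hMC1 : prob p (fun ω => (X ω, Y ω, (V ω, W ω))) (x, y, (u, v)) = 0 :=
      le_antisymm (le_trans (le_trans (hM4A2 x y u v) (hA2C1 x u)) h0.symm.le)
        (prob_nonneg hp _ _)
    have hAC1 : prob p (fun ω => (X ω, (V ω, W ω))) (x, (u, v)) = 0 :=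
      le_antisymm (le_trans (le_trans (hAA2 x u v) (hA2C1 x u)) h0.symm.le)
        (prob_nonneg hp _ _)
    rw [hMC1, hAC1, zero_mul, zero_mul]
  · refine mul_right_cancel₀ (ne_of_gt h0) ?_
    calc prob p (fun ω => (X ω, Y ω, (V ω, W ω))) (x, y, (u, v)) *
          prob p (fun ω => (V ω, W ω)) (u, v) * prob p V u
        = prob p (fun ω => (X ω, Y ω, (V ω, W ω))) (x, y, (u, v)) * prob p V u *
          prob p (fun ω => (V ω, W ω)) (u, v) := by ring
      _ = prob p (fun ω => (X ω, (V ω, W ω))) (x, (u, v)) *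
          prob p (fun ω => (Y ω, V ω)) (y, u) *
          prob p (fun ω => (V ω, W ω)) (u, v) := by rw [claim1]
      _ = prob p (fun ω => (X ω, (V ω, W ω))) (x, (u, v)) *
          (prob p (fun ω => (V ω, W ω)) (u, v) * prob p (fun ω => (Y ω, V ω)) (y, u)) := by
          ring
      _ = prob p (fun ω => (X ω, (V ω, W ω))) (x, (u, v)) *
          (prob p (fun ω => (Y ω, (V ω, W ω))) (y, (u, v)) * prob p V u) := by
          rw [claim2]
      _ = prob p (fun ω => (X ω, (V ω, W ω))) (x, (u, v)) *
          prob p (fun ω => (Y ω, (V ω, W ω))) (y, (u, v)) * prob p V u := by ring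

end step

/-- interactive communication between independent X, Y keeps them
conditionally independent given the transcript. -/
theorem stmt2 {Ω 𝒳 𝒴 𝒰 : Type*} [Fintype Ω] [Fintype 𝒳] [Fintype 𝒴] [Fintype 𝒰]
    (p : Ω → ℝ) (hp : IsPMF p) (r : ℕ)
    (X : Ω → 𝒳) (Y : Ω → 𝒴) (U : Fin r → Ω → 𝒰)
    (hindep : ∀ x y, prob p (fun ω => (X ω, Y ω)) (x, y) = prob p X x * prob p Y y)
    (hodd : ∀ i : Fin r, Odd (i.1 + 1) →
      condMI p (U i) Y
        (fun ω => ((fun j : Fin i.1 => U ⟨j.1, by have h1 := j.2; have h2 := i.2; omega⟩ ω),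
          X ω)) = 0)
    (heven : ∀ i : Fin r, Even (i.1 + 1) →
      condMI p (U i) X
        (fun ω => ((fun j : Fin i.1 => U ⟨j.1, by have h1 := j.2; have h2 := i.2; omega⟩ ω),
          Y ω)) = 0) :
    condMI p X Y (fun ω => fun i : Fin r => U i ω) = 0 := by 
  have key : ∀ k (hk : k ≤ r), ∀ (x : 𝒳) (y : 𝒴) (u : Fin k → 𝒰),
      prob p (fun ω => (X ω, Y ω, fun j : Fin k => U ⟨j.1, lt_of_lt_of_le j.2 hk⟩ ω)) (x, y, u) *
        prob p (fun ω => fun j : Fin k => U ⟨j.1, lt_of_lt_of_le j.2 hk⟩ ω) u =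
      prob p (fun ω => (X ω, fun j : Fin k => U ⟨j.1, lt_of_lt_of_le j.2 hk⟩ ω)) (x, u) *
        prob p (fun ω => (Y ω, fun j : Fin k => U ⟨j.1, lt_of_lt_of_le j.2 hk⟩ ω)) (y, u) := by
    intro k
    induction k with
    | zero =>
      intro hk x y u
      have hu : ∀ f : Fin 0 → 𝒰, f = u := fun f => funext fun j => j.elim0
      have e1 : prob p (fun ω => (X ω, Y ω, fun j : Fin 0 =>
          U ⟨j.1, lt_of_lt_of_le j.2 hk⟩ ω)) (x, y, u) = prob p (fun ω => (X ω, Y ω)) (x, y) :=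
        prob_eq_prob p _ _ _ _ (fun ω => by
          simp only [Prod.mk.injEq]
          exact ⟨fun h => ⟨h.1, h.2.1⟩, fun h => ⟨h.1, h.2, hu _⟩⟩)
      have e2 : prob p (fun ω => fun j : Fin 0 => U ⟨j.1, lt_of_lt_of_le j.2 hk⟩ ω) u = 1 := by
        unfold prob
        rw [← hp.2]
        exact Finset.sum_congr rfl fun ω _ => if_pos (hu _)
      have e3 : prob p (fun ω => (X ω, fun j : Fin 0 =>
          U ⟨j.1, lt_of_lt_of_le j.2 hk⟩ ω)) (x, u) = prob p X x :=
        prob_eq_prob p _ _ _ _ (fun ω => by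
          simp only [Prod.mk.injEq]
          exact ⟨fun h => h.1, fun h => ⟨h, hu _⟩⟩)
      have e4 : prob p (fun ω => (Y ω, fun j : Fin 0 =>
          U ⟨j.1, lt_of_lt_of_le j.2 hk⟩ ω)) (y, u) = prob p Y y :=
        prob_eq_prob p _ _ _ _ (fun ω => by
          simp only [Prod.mk.injEq]
          exact ⟨fun h => h.1, fun h => ⟨h, hu _⟩⟩)
      rw [e1, e2, e3, e4, mul_one]
      exact hindep x y
    | succ k ihk =>
      intro hk x y u
      have hk' : k < r := hk
      have hkr : k ≤ r := le_of_lt hk'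
      have ih := ihk hkr
      set V : Ω → Fin k → 𝒰 := fun ω => fun j : Fin k => U ⟨j.1, lt_of_lt_of_le j.2 hkr⟩ ω
        with hVdef
      set W : Ω → 𝒰 := U ⟨k, hk'⟩ with hWdef
      -- relation between length-(k+1) prefix and (V, W)
      have hsplit : ∀ ω (w : Fin (k + 1) → 𝒰),
          (fun j : Fin (k + 1) => U ⟨j.1, lt_of_lt_of_le j.2 hk⟩ ω) = w ↔
            (V ω = Fin.init w ∧ W ω = w (Fin.last k)) := by
        intro ω w
        constructor
        · intro h
          constructor
          · funext j
            show U ⟨j.1, _⟩ ω = w j.castSucc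
            rw [← congrFun h j.castSucc]
            rfl
          · show U ⟨k, hk'⟩ ω = w (Fin.last k)
            rw [← congrFun h (Fin.last k)]
            rfl
        · rintro ⟨h1, h2⟩
          funext j
          induction j using Fin.lastCases with
          | last =>
            show U ⟨k, _⟩ ω = w (Fin.last k)
            exact h2
          | cast j =>
            show U ⟨j.1, _⟩ ω = w j.castSucc
            exact congrFun h1 j
      -- conditional independence after this round, via step_lemma
      have conc : ∀ x y u v,
          prob p (fun ω => (X ω, Y ω, (V ω, W ω))) (x, y, (u, v)) *
            prob p (fun ω => (V ω, W ω)) (u, v) =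
          prob p (fun ω => (X ω, (V ω, W ω))) (x, (u, v)) *
            prob p (fun ω => (Y ω, (V ω, W ω))) (y, (u, v)) := by
        rcases Nat.even_or_odd (k + 1) with hpar | hpar
        · -- even round: Bob speaks; swap roles of X and Y
          have h0 : condMI p W X (fun ω => (V ω, Y ω)) = 0 := heven ⟨k, hk'⟩ hpar
          have himp := condMI_eq_zero_imp p hp W X (fun ω => (V ω, Y ω)) h0
          have ih_sw : ∀ y x u,
              prob p (fun ω => (Y ω, X ω, V ω)) (y, x, u) * prob p V u =
              prob p (fun ω => (Y ω, V ω)) (y, u) * prob p (fun ω => (X ω, V ω)) (x, u) := by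
            intro y x u
            have s1 : prob p (fun ω => (Y ω, X ω, V ω)) (y, x, u) =
                prob p (fun ω => (X ω, Y ω, V ω)) (x, y, u) :=
              prob_eq_prob p _ _ _ _ (fun ω => by simp only [Prod.mk.injEq]; tauto)
            rw [s1, ih x y u, mul_comm]
          have conc_sw := step_lemma p hp.1 Y X V W ih_sw (fun v x u y => himp v x (u, y))
          intro x y u v
          have s2 : prob p (fun ω => (X ω, Y ω, (V ω, W ω))) (x, y, (u, v)) =
              prob p (fun ω => (Y ω, X ω, (V ω, W ω))) (y, x, (u, v)) :=
            prob_eq_prob p _ _ _ _ (fun ω => by simp only [Prod.mk.injEq]; tauto)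
          rw [s2, conc_sw y x u v, mul_comm]
        · -- odd round: Alice speaks
          have h0 : condMI p W Y (fun ω => (V ω, X ω)) = 0 := hodd ⟨k, hk'⟩ hpar
          exact step_lemma p hp.1 X Y V W ih
            (fun v y u x => condMI_eq_zero_imp p hp W Y (fun ω => (V ω, X ω)) h0 v y (u, x))
      -- translate to the (k+1)-prefix formulation
      have E1 : prob p (fun ω => (X ω, Y ω, fun j : Fin (k+1) =>
            U ⟨j.1, lt_of_lt_of_le j.2 hk⟩ ω)) (x, y, u) =
          prob p (fun ω => (X ω, Y ω, (V ω, W ω))) (x, y, (Fin.init u, u (Fin.last k))) :=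
        prob_eq_prob p _ _ _ _ (fun ω => by
          simp only [Prod.mk.injEq, hsplit ω u]; try tauto)
      have E2 : prob p (fun ω => fun j : Fin (k+1) => U ⟨j.1, lt_of_lt_of_le j.2 hk⟩ ω) u =
          prob p (fun ω => (V ω, W ω)) (Fin.init u, u (Fin.last k)) :=
        prob_eq_prob p _ _ _ _ (fun ω => by
          simp only [Prod.mk.injEq, hsplit ω u]; try tauto)
      have E3 : prob p (fun ω => (X ω, fun j : Fin (k+1) =>
            U ⟨j.1, lt_of_lt_of_le j.2 hk⟩ ω)) (x, u) =
          prob p (fun ω => (X ω, (V ω, W ω))) (x, (Fin.init u, u (Fin.last k))) :=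
        prob_eq_prob p _ _ _ _ (fun ω => by
          simp only [Prod.mk.injEq, hsplit ω u]; try tauto)
      have E4 : prob p (fun ω => (Y ω, fun j : Fin (k+1) =>
            U ⟨j.1, lt_of_lt_of_le j.2 hk⟩ ω)) (y, u) =
          prob p (fun ω => (Y ω, (V ω, W ω))) (y, (Fin.init u, u (Fin.last k))) :=
        prob_eq_prob p _ _ _ _ (fun ω => by
          simp only [Prod.mk.injEq, hsplit ω u]; try tauto)
      rw [E1, E2, E3, E4]
      exact conc x y (Fin.init u) (u (Fin.last k))
  exact condMI_eq_zero_of_factor p hp.1 X Y _ (fun x y u => key r le_rfl x y u)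
end

section
/- Let X, Y, U, Z be finite random variables with joint pmf p satisfying the Markov chains U - X - (Y, Z) and Z - (U, Y) - X. Suppose x, x' are such that there exists u with p(u | x) > 0 and p(u | x') > 0, and suppose y is such that p(x, y) > 0 and p(x', y) > 0. Then p(z | x, y) = p(z | x', y) for every z. -/
open Finset

lemma prob_congr {Ω α β : Type*} [Fintype Ω] (p : Ω → ℝ) {V : Ω → α} {W : Ω → β}
    {v : α} {w : β} (h : ∀ ω, V ω = v ↔ W ω = w) :
    prob p V v = prob p W w := by
  classical
  unfold prob
  exact Finset.sum_congr rfl fun ω _ => if_congr (h ω) rfl rfl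

lemma prob_mono {Ω α β : Type*} [Fintype Ω] {p : Ω → ℝ} (hp : ∀ ω, 0 ≤ p ω)
    {V : Ω → α} {W : Ω → β} {v : α} {w : β} (h : ∀ ω, V ω = v → W ω = w) :
    prob p V v ≤ prob p W w := by
  unfold prob
  refine Finset.sum_le_sum fun ω _ => ?_
  by_cases hv : V ω = v
  · simp [hv, h ω hv]
  · simp only [hv, if_false]
    split <;> simp [hp ω]

lemma prob_marg_s8 {Ω α γ : Type*} [Fintype Ω] [DecidableEq γ]
    (p : Ω → ℝ) (V : Ω → α) (C : Ω → γ) (v : α) :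
    prob p V v = ∑ c ∈ Finset.univ.image C, prob p (fun ω => (V ω, C ω)) (v, c) := by
  unfold prob
  rw [Finset.sum_comm]
  refine Finset.sum_congr rfl fun ω _ => ?_
  by_cases hv : V ω = v
  · simp only [Prod.mk.injEq, hv, true_and]
    rw [Finset.sum_ite_eq]
    simp [Finset.mem_image]
  · simp [hv]

/-- under U - X - (Y,Z) and Z - (U,Y) - X, if some message u has positive
probability at both x and x', and p(x,y) > 0, p(x',y) > 0, then p(z|x,y) = p(z|x',y). -/
theorem stmt8 {Ω 𝒳 𝒴 𝒰 𝒵 : Type*} [Fintype Ω]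
    (p : Ω → ℝ) (hp : IsPMF p)
    (X : Ω → 𝒳) (Y : Ω → 𝒴) (U : Ω → 𝒰) (Z : Ω → 𝒵)
    (hA : MarkovChain p U X (fun ω => (Y ω, Z ω)))
    (hB : MarkovChain p Z (fun ω => (U ω, Y ω)) X)
    (x x' : 𝒳) (y : 𝒴)
    (hu : ∃ u, 0 < prob p (fun ω => (U ω, X ω)) (u, x) ∧
      0 < prob p (fun ω => (U ω, X ω)) (u, x'))
    (hxy : 0 < prob p (fun ω => (X ω, Y ω)) (x, y))
    (hx'y : 0 < prob p (fun ω => (X ω, Y ω)) (x', y)) :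
    ∀ z, prob p (fun ω => (Z ω, X ω, Y ω)) (z, x, y) /
        prob p (fun ω => (X ω, Y ω)) (x, y) =
      prob p (fun ω => (Z ω, X ω, Y ω)) (z, x', y) /
        prob p (fun ω => (X ω, Y ω)) (x', y) := by
  classical
  obtain ⟨u, hux, hux'⟩ := hu
  intro z
  set a := prob p (fun ω => (U ω, X ω)) (u, x) with ha_def
  set a' := prob p (fun ω => (U ω, X ω)) (u, x') with ha'_def
  set b := prob p X x with hb_def
  set b' := prob p X x' with hb'_def
  set c := prob p (fun ω => (X ω, Y ω)) (x, y) with hc_def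
  set c' := prob p (fun ω => (X ω, Y ω)) (x', y) with hc'_def
  set q := prob p (fun ω => (Z ω, X ω, Y ω)) (z, x, y) with hq_def
  set q' := prob p (fun ω => (Z ω, X ω, Y ω)) (z, x', y) with hq'_def
  set e := prob p (fun ω => (U ω, X ω, Y ω)) (u, x, y) with he_def
  set e' := prob p (fun ω => (U ω, X ω, Y ω)) (u, x', y) with he'_def
  set s := prob p (fun ω => (U ω, Y ω)) (u, y) with hs_def
  set r := prob p (fun ω => (Z ω, U ω, Y ω)) (z, u, y) with hr_def
  have hb : 0 < b := lt_of_lt_of_le hxy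
    (prob_mono hp.1 (fun ω h => by simpa using congrArg Prod.fst h))
  have hb' : 0 < b' := lt_of_lt_of_le hx'y
    (prob_mono hp.1 (fun ω h => by simpa using congrArg Prod.fst h))
  -- E1 family (from hA), in canonical form
  have E1 : ∀ (x0 : 𝒳) (w : 𝒵),
      prob p (fun ω => (U ω, X ω, Y ω, Z ω)) (u, x0, y, w) * prob p X x0
      = prob p (fun ω => (U ω, X ω)) (u, x0) *
        prob p (fun ω => (Z ω, X ω, Y ω)) (w, x0, y) := by
    intro x0 w
    have h := hA u x0 (y, w)
    have h1 : prob p (fun ω => (U ω, X ω, (Y ω, Z ω))) (u, x0, (y, w))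
        = prob p (fun ω => (U ω, X ω, Y ω, Z ω)) (u, x0, y, w) :=
      prob_congr p (fun ω => by simp only [Prod.mk.injEq]; try tauto)
    have h2 : prob p (fun ω => ((Y ω, Z ω), X ω)) ((y, w), x0)
        = prob p (fun ω => (Z ω, X ω, Y ω)) (w, x0, y) :=
      prob_congr p (fun ω => by simp only [Prod.mk.injEq]; try tauto)
    rw [h1, h2] at h
    exact h
  -- E2 : e * b = a * c, by marginalizing E1 over z
  have marg_e : ∀ (x0 : 𝒳), prob p (fun ω => (U ω, X ω, Y ω)) (u, x0, y)
      = ∑ w ∈ Finset.univ.image Z, prob p (fun ω => (U ω, X ω, Y ω, Z ω)) (u, x0, y, w) := by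
    intro x0
    rw [prob_marg_s8 p (fun ω => (U ω, X ω, Y ω)) Z (u, x0, y)]
    exact Finset.sum_congr rfl fun w _ =>
      prob_congr p (fun ω => by simp only [Prod.mk.injEq]; try tauto)
  have marg_c : ∀ (x0 : 𝒳), prob p (fun ω => (X ω, Y ω)) (x0, y)
      = ∑ w ∈ Finset.univ.image Z, prob p (fun ω => (Z ω, X ω, Y ω)) (w, x0, y) := by
    intro x0
    rw [prob_marg_s8 p (fun ω => (X ω, Y ω)) Z (x0, y)]
    exact Finset.sum_congr rfl fun w _ =>
      prob_congr p (fun ω => by simp only [Prod.mk.injEq]; try tauto)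
  have E2 : e * b = a * c := by
    rw [he_def, hc_def, marg_e x, marg_c x, Finset.sum_mul, Finset.mul_sum]
    exact Finset.sum_congr rfl fun w _ => E1 x w
  have E2' : e' * b' = a' * c' := by
    rw [he'_def, hc'_def, marg_e x', marg_c x', Finset.sum_mul, Finset.mul_sum]
    exact Finset.sum_congr rfl fun w _ => E1 x' w
  have he : 0 < e := by nlinarith [mul_pos hux hxy]
  have he' : 0 < e' := by nlinarith [mul_pos hux' hx'y]
  have hs : 0 < s := lt_of_lt_of_le he
    (prob_mono hp.1 (fun ω h => by
      simp only [Prod.mk.injEq] at h ⊢; tauto))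
  -- E3 family (from hB)
  have E3 : ∀ (x0 : 𝒳), prob p (fun ω => (U ω, X ω, Y ω, Z ω)) (u, x0, y, z) * s
      = r * prob p (fun ω => (U ω, X ω, Y ω)) (u, x0, y) := by
    intro x0
    have h := hB z (u, y) x0
    have h1 : prob p (fun ω => (Z ω, (U ω, Y ω), X ω)) (z, (u, y), x0)
        = prob p (fun ω => (U ω, X ω, Y ω, Z ω)) (u, x0, y, z) :=
      prob_congr p (fun ω => by simp only [Prod.mk.injEq]; try tauto)
    have h2 : prob p (fun ω => (Z ω, (U ω, Y ω))) (z, (u, y))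
        = prob p (fun ω => (Z ω, U ω, Y ω)) (z, u, y) :=
      prob_congr p (fun ω => by simp only [Prod.mk.injEq]; try tauto)
    have h3 : prob p (fun ω => (X ω, (U ω, Y ω))) (x0, (u, y))
        = prob p (fun ω => (U ω, X ω, Y ω)) (u, x0, y) :=
      prob_congr p (fun ω => by simp only [Prod.mk.injEq]; try tauto)
    rw [h1, h2, h3] at h
    exact h
  have goal1 : q / c = r / s := by
    rw [div_eq_div_iff hxy.ne' hs.ne']
    have E1z := E1 x z
    have E3z := E3 x
    rw [← hq_def, ← ha_def, ← hb_def] at E1z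
    rw [← he_def] at E3z
    have cancel : (a * b) * (q * s) = (a * b) * (r * c) := by
      linear_combination (-(b * s)) * E1z + b ^ 2 * E3z + b * r * E2
    exact mul_left_cancel₀ (mul_pos hux hb).ne' cancel
  have goal2 : q' / c' = r / s := by
    rw [div_eq_div_iff hx'y.ne' hs.ne']
    have E1z := E1 x' z
    have E3z := E3 x'
    rw [← hq'_def, ← ha'_def, ← hb'_def] at E1z
    rw [← he'_def] at E3z
    have cancel : (a' * b') * (q' * s) = (a' * b') * (r * c') := by
      linear_combination (-(b' * s)) * E1z + b' ^ 2 * E3z + b' * r * E2'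
    exact mul_left_cancel₀ (mul_pos hux' hb').ne' cancel
  rw [goal1, goal2]
end
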